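/- arXiv:1603.05384 — 3 statements merged into one kernel-verified Lean document; each statement's English description precedes it below -/
import Mathlib

section
/- Let F be a field and V an F-vector space. On the set Γ₃ = V × T²V × T³V define the operation (v₁, v₂, v₃) · (v₁', v₂', v₃') = (v₁ + v₁', v₂ + v₂' + [v₁, v₁'], v₃ + v₃' + 3[v₁, v₂'] + 3[v₂, v₁'] + [v₁, v₁', v₁' − v₁]), where brackets are [x, y] = x ⊗ y − y ⊗ x in the tensor algebra and [x, y, z] = [[x, y], z]. Then this operation is associative, (0, 0, 0) is a two-sided identity, and (−v₁, −v₂, −v₃) is a two-sided inverse of (v₁, v₂, v₃); that is, Γ₃ is a group under this operation (with no assumption on the characteristic of F). -/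
/-!
STATEMENT 4: The set `Γ₃ = V × T²V × T³V` with the operation
`(v₁,v₂,v₃)·(v₁',v₂',v₃') = (v₁+v₁', v₂+v₂'+[v₁,v₁'],
v₃+v₃'+3[v₁,v₂']+3[v₂,v₁']+[v₁,v₁',v₁'−v₁])` is a group: the operation is
associative, `(0,0,0)` is a two-sided identity and `(−v₁,−v₂,−v₃)` is a
two-sided inverse (with no assumption on the characteristic of `F`).
-/
open TensorProduct

section LieTuples

variable (F : Type*) {V : Type*} [Field F] [AddCommGroup V] [Module F V]

/-- `[u, w] = u ⊗ w − w ⊗ u ∈ T²V` for `u, w ∈ V`. -/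
noncomputable def br11 (u w : V) : V ⊗[F] V :=
  u ⊗ₜ[F] w - w ⊗ₜ[F] u

/-- `[x, y] = x ⊗ y − y ⊗ x ∈ T³V` for `x ∈ T²V`, `y ∈ V`, where the tensor
`y ⊗ x ∈ V ⊗ T²V` is rewritten in `T³V = (V ⊗ V) ⊗ V` via the associator. -/
noncomputable def br21 (x : V ⊗[F] V) (y : V) : (V ⊗[F] V) ⊗[F] V :=
  x ⊗ₜ[F] y - (TensorProduct.assoc F V V V).symm (y ⊗ₜ[F] x)

/-- `[y, x] = y ⊗ x − x ⊗ y ∈ T³V` for `y ∈ V`, `x ∈ T²V`. -/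
noncomputable def br12 (y : V) (x : V ⊗[F] V) : (V ⊗[F] V) ⊗[F] V :=
  (TensorProduct.assoc F V V V).symm (y ⊗ₜ[F] x) - x ⊗ₜ[F] y

/-- The canonical isomorphism `V ⊗ T³V ≃ T⁴V` built from associators. -/
noncomputable def e13 : (V ⊗[F] ((V ⊗[F] V) ⊗[F] V)) ≃ₗ[F] ((V ⊗[F] V) ⊗[F] V) ⊗[F] V :=
  (TensorProduct.assoc F V (V ⊗[F] V) V).symm ≪≫ₗ
    TensorProduct.congr (TensorProduct.assoc F V V V).symm (LinearEquiv.refl F V)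

/-- The canonical isomorphism `T²V ⊗ T²V ≃ T⁴V` built from the associator. -/
noncomputable def e22 : ((V ⊗[F] V) ⊗[F] (V ⊗[F] V)) ≃ₗ[F] ((V ⊗[F] V) ⊗[F] V) ⊗[F] V :=
  (TensorProduct.assoc F (V ⊗[F] V) V V).symm

/-- `[y, z] ∈ T⁴V` for `y ∈ V`, `z ∈ T³V`. -/
noncomputable def br13 (y : V) (z : (V ⊗[F] V) ⊗[F] V) : ((V ⊗[F] V) ⊗[F] V) ⊗[F] V :=
  e13 F (y ⊗ₜ[F] z) - z ⊗ₜ[F] y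

/-- `[z, y] ∈ T⁴V` for `z ∈ T³V`, `y ∈ V`. -/
noncomputable def br31 (z : (V ⊗[F] V) ⊗[F] V) (y : V) : ((V ⊗[F] V) ⊗[F] V) ⊗[F] V :=
  z ⊗ₜ[F] y - e13 F (y ⊗ₜ[F] z)

/-- `[x, x'] ∈ T⁴V` for `x, x' ∈ T²V`. -/
noncomputable def br22 (x x' : V ⊗[F] V) : ((V ⊗[F] V) ⊗[F] V) ⊗[F] V :=
  e22 F (x ⊗ₜ[F] x') - e22 F (x' ⊗ₜ[F] x)

/-- The multiplication of Lie 3-tuples, on `Γ₃ = V × T²V × T³V`. -/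
noncomputable def gamma3Mul (a b : V × (V ⊗[F] V) × ((V ⊗[F] V) ⊗[F] V)) :
    V × (V ⊗[F] V) × ((V ⊗[F] V) ⊗[F] V) :=
  (a.1 + b.1,
   a.2.1 + b.2.1 + br11 F a.1 b.1,
   a.2.2 + b.2.2 + 3 • br12 F a.1 b.2.1 + 3 • br21 F a.2.1 b.1
     + br21 F (br11 F a.1 b.1) (b.1 - a.1))

/-- The multiplication of Lie 4-tuples, on `Γ₄ = V × T²V × T³V × T⁴V`. -/
noncomputable def gamma4Mul
    (a b : V × (V ⊗[F] V) × ((V ⊗[F] V) ⊗[F] V) × (((V ⊗[F] V) ⊗[F] V) ⊗[F] V)) :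
    V × (V ⊗[F] V) × ((V ⊗[F] V) ⊗[F] V) × (((V ⊗[F] V) ⊗[F] V) ⊗[F] V) :=
  (a.1 + b.1,
   a.2.1 + b.2.1 + br11 F a.1 b.1,
   a.2.2.1 + b.2.2.1 + 3 • br12 F a.1 b.2.1 + 3 • br21 F a.2.1 b.1
     + br21 F (br11 F a.1 b.1) (b.1 - a.1),
   a.2.2.2 + b.2.2.2 + br13 F a.1 b.2.2.1 + 3 • br22 F a.2.1 b.2.1
     + br31 F a.2.2.1 b.1
     + br31 F (br21 F a.2.1 b.1) (b.1 - a.1)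
     + br31 F (br12 F a.1 b.2.1) (b.1 - a.1)
     + br22 F (br11 F a.1 b.1) (b.2.1 - a.2.1)
     - br31 F (br21 F (br11 F a.1 b.1) a.1) b.1)
end LieTuples

/-!
All brackets are bilinear, so in `(a·b)·c` and `a·(b·c)` the terms of degree at most two in the
first components cancel. The cubic terms of the third components differ by twice the Jacobiator
`[[x,y],z] + [[y,z],x] + [[z,x],y]` of the first components `x, y, z`, which vanishes in the
tensor algebra; this is why no assumption on the characteristic is needed. The identity and
inverse laws only use `[v,v] = 0` and `[y,x] = -[x,y]`.
-/

section BracketLaws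

variable {F V : Type*} [Field F] [AddCommGroup V] [Module F V]

lemma br11_add_left (u v w : V) : br11 F (u + v) w = br11 F u w + br11 F v w := by
  simp only [br11, add_tmul, tmul_add]; abel

lemma br11_add_right (u v w : V) : br11 F u (v + w) = br11 F u v + br11 F u w := by
  simp only [br11, add_tmul, tmul_add]; abel

lemma br11_zero_left (w : V) : br11 F 0 w = 0 := by simp [br11]

lemma br11_zero_right (u : V) : br11 F u 0 = 0 := by simp [br11]

lemma br11_self (u : V) : br11 F u u = 0 := sub_self _

lemma br11_neg_left (u w : V) : br11 F (-u) w = -br11 F u w := by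
  simp only [br11, neg_tmul, tmul_neg]; abel

lemma br11_neg_right (u w : V) : br11 F u (-w) = -br11 F u w := by
  simp only [br11, neg_tmul, tmul_neg]; abel

lemma br21_add_left (x y : V ⊗[F] V) (w : V) : br21 F (x + y) w = br21 F x w + br21 F y w := by
  simp only [br21, add_tmul, tmul_add, map_add]; abel

lemma br21_add_right (x : V ⊗[F] V) (v w : V) : br21 F x (v + w) = br21 F x v + br21 F x w := by
  simp only [br21, add_tmul, tmul_add, map_add]; abel

lemma br21_sub_right (x : V ⊗[F] V) (v w : V) : br21 F x (v - w) = br21 F x v - br21 F x w := by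
  simp only [br21, sub_tmul, tmul_sub, map_sub]; abel

lemma br21_neg_left (x : V ⊗[F] V) (w : V) : br21 F (-x) w = -br21 F x w := by
  simp only [br21, neg_tmul, tmul_neg, map_neg]; abel

lemma br21_neg_right (x : V ⊗[F] V) (w : V) : br21 F x (-w) = -br21 F x w := by
  simp only [br21, neg_tmul, tmul_neg, map_neg]; abel

lemma br21_zero_left (w : V) : br21 F 0 w = 0 := by simp [br21]

lemma br21_zero_right (x : V ⊗[F] V) : br21 F x 0 = 0 := by simp [br21]

lemma br12_eq_neg_br21 (y : V) (x : V ⊗[F] V) : br12 F y x = -br21 F x y :=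
  (neg_sub _ _).symm

/-- The Jacobi identity `[[u,v],w] + [[v,w],u] + [[w,u],v] = 0`, in the form with `[w,u] = -[u,w]`. -/
lemma br21_br11_jacobi (u v w : V) :
    br21 F (br11 F u v) w + br21 F (br11 F v w) u = br21 F (br11 F u w) v := by
  simp only [br21, br11, sub_tmul, tmul_sub, map_sub, TensorProduct.assoc_symm_tmul]; abel

lemma gamma3Mul_assoc (a b c : V × (V ⊗[F] V) × ((V ⊗[F] V) ⊗[F] V)) :
    gamma3Mul F (gamma3Mul F a b) c = gamma3Mul F a (gamma3Mul F b c) := by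
  obtain ⟨x, a₂, a₃⟩ := a
  obtain ⟨y, b₂, b₃⟩ := b
  obtain ⟨z, c₂, c₃⟩ := c
  simp only [gamma3Mul, Prod.mk.injEq, br12_eq_neg_br21, br11_add_left, br11_add_right,
    br21_add_left, br21_add_right, br21_sub_right]
  refine ⟨by abel, by abel, ?_⟩
  linear_combination (norm := module) (2 : ℤ) • br21_br11_jacobi (F := F) x y z

lemma zero_gamma3Mul (a : V × (V ⊗[F] V) × ((V ⊗[F] V) ⊗[F] V)) : gamma3Mul F 0 a = a := by
  simp [gamma3Mul, br12_eq_neg_br21, br11_zero_left, br21_zero_left, br21_zero_right]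

lemma gamma3Mul_zero (a : V × (V ⊗[F] V) × ((V ⊗[F] V) ⊗[F] V)) : gamma3Mul F a 0 = a := by
  simp [gamma3Mul, br12_eq_neg_br21, br11_zero_right, br21_zero_left, br21_zero_right]

lemma neg_gamma3Mul_self (a : V × (V ⊗[F] V) × ((V ⊗[F] V) ⊗[F] V)) : gamma3Mul F (-a) a = 0 := by
  simp [gamma3Mul, br12_eq_neg_br21, br11_neg_left, br11_self, br21_neg_left, br21_neg_right,
    br21_zero_left]

lemma gamma3Mul_neg_self (a : V × (V ⊗[F] V) × ((V ⊗[F] V) ⊗[F] V)) : gamma3Mul F a (-a) = 0 := by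
  simp [gamma3Mul, br12_eq_neg_br21, br11_neg_right, br11_self, br21_neg_left, br21_neg_right,
    br21_zero_left]

end BracketLaws

theorem gamma3_is_group (F V : Type*) [Field F] [AddCommGroup V] [Module F V] :
    (∀ a b c : V × (V ⊗[F] V) × ((V ⊗[F] V) ⊗[F] V),
        gamma3Mul F (gamma3Mul F a b) c = gamma3Mul F a (gamma3Mul F b c)) ∧
    (∀ a : V × (V ⊗[F] V) × ((V ⊗[F] V) ⊗[F] V),
        gamma3Mul F ((0, 0, 0) : V × (V ⊗[F] V) × ((V ⊗[F] V) ⊗[F] V)) a = a ∧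
        gamma3Mul F a ((0, 0, 0) : V × (V ⊗[F] V) × ((V ⊗[F] V) ⊗[F] V)) = a) ∧
    (∀ a : V × (V ⊗[F] V) × ((V ⊗[F] V) ⊗[F] V),
        gamma3Mul F (-a.1, -a.2.1, -a.2.2) a = ((0, 0, 0) : V × (V ⊗[F] V) × ((V ⊗[F] V) ⊗[F] V)) ∧
        gamma3Mul F a (-a.1, -a.2.1, -a.2.2) = ((0, 0, 0) : V × (V ⊗[F] V) × ((V ⊗[F] V) ⊗[F] V))) := by
  exact ⟨gamma3Mul_assoc, fun a => ⟨zero_gamma3Mul a, gamma3Mul_zero a⟩,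
    fun a => ⟨neg_gamma3Mul_self a, gamma3Mul_neg_self a⟩⟩
end

section
/- Let F be a field and V an F-vector space. On the set Γ₄ = V × T²V × T³V × T⁴V define the operation (v₁, v₂, v₃, v₄) · (v₁', v₂', v₃', v₄') whose first three coordinates are v₁ + v₁', v₂ + v₂' + [v₁, v₁'], and v₃ + v₃' + 3[v₁, v₂'] + 3[v₂, v₁'] + [v₁, v₁', v₁' − v₁], and whose fourth coordinate is v₄ + v₄' + [v₁, v₃'] + 3[v₂, v₂'] + [v₃, v₁'] + [v₂, v₁', v₁' − v₁] + [v₁, v₂', v₁' − v₁] + [v₁, v₁', v₂' − v₂] − [v₁, v₁', v₁, v₁'], where brackets are [x, y] = x ⊗ y − y ⊗ x in the tensor algebra and left-normed brackets are [x, y, z] = [[x, y], z] and [x, y, z, w] = [[[x, y], z], w]. Then this operation is associative, (0, 0, 0, 0) is a two-sided identity, and (−v₁, −v₂, −v₃, −v₄) is a two-sided inverse of (v₁, v₂, v₃, v₄); that is, Γ₄ is a group under this operation. -/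
/-!
STATEMENT 5: The set `Γ₄ = V × T²V × T³V × T⁴V` with the stated operation
(whose fourth coordinate is
`v₄+v₄'+[v₁,v₃']+3[v₂,v₂']+[v₃,v₁']+[v₂,v₁',v₁'−v₁]+[v₁,v₂',v₁'−v₁]
+[v₁,v₁',v₂'−v₂]−[v₁,v₁',v₁,v₁']`) is a group: the operation is associative,
`(0,0,0,0)` is a two-sided identity and `(−v₁,−v₂,−v₃,−v₄)` is a two-sided
inverse.
-/
open TensorProduct

/-!
Once the brackets are expanded by bilinearity and the associators `e13`, `e22` are pushed onto pure
tensors, every coordinate of either side of each group law is a `ℤ`-linear combination of tensor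
monomials in the components of the arguments, and the two combinations agree term by term.
-/

section TensorNormalForm

variable (F : Type*) {V : Type*} [Field F] [AddCommGroup V] [Module F V]

theorem e13_tmul_tmul (v : V) (x : V ⊗[F] V) (w : V) :
    e13 F (v ⊗ₜ[F] (x ⊗ₜ[F] w)) = (TensorProduct.assoc F V V V).symm (v ⊗ₜ[F] x) ⊗ₜ[F] w := by
  simp [e13]

theorem e22_tmul_tmul (x : V ⊗[F] V) (v w : V) :
    e22 F (x ⊗ₜ[F] (v ⊗ₜ[F] w)) = (x ⊗ₜ[F] v) ⊗ₜ[F] w := by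
  simp [e22]

theorem e13_tmul_assoc_symm_tmul (v w : V) (x : V ⊗[F] V) :
    e13 F (v ⊗ₜ[F] (TensorProduct.assoc F V V V).symm (w ⊗ₜ[F] x))
      = e22 F ((v ⊗ₜ[F] w) ⊗ₜ[F] x) := by
  induction x using TensorProduct.induction_on with
  | zero => simp
  | tmul a b => simp [e13, e22]
  | add a b ha hb => simp only [map_add, tmul_add, ha, hb]

end TensorNormalForm

-- `abel` is very slow on `3 • (…)` of large sums; expanding the multiple first avoids this.
theorem nsmul_three {M : Type*} [AddMonoid M] (x : M) : 3 • x = x + x + x := by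
  rw [succ_nsmul, two_nsmul]

abbrev Gamma4 (F V : Type*) [Field F] [AddCommGroup V] [Module F V] :=
  V × (V ⊗[F] V) × ((V ⊗[F] V) ⊗[F] V) × (((V ⊗[F] V) ⊗[F] V) ⊗[F] V)

section Gamma4

variable (F : Type*) {V : Type*} [Field F] [AddCommGroup V] [Module F V]

theorem zero_gamma4Mul (a : Gamma4 F V) : gamma4Mul F 0 a = a := by
  simp [gamma4Mul, br11, br12, br21, br13, br31, br22, Prod.ext_iff]

theorem gamma4Mul_zero (a : Gamma4 F V) : gamma4Mul F a 0 = a := by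
  simp [gamma4Mul, br11, br12, br21, br13, br31, br22, Prod.ext_iff]

theorem neg_gamma4Mul_self (a : Gamma4 F V) : gamma4Mul F (-a) a = 0 := by
  obtain ⟨a₁, a₂, a₃, a₄⟩ := a
  simp only [gamma4Mul, br11, br12, br21, br13, br31, br22, Prod.fst_neg, Prod.snd_neg,
    Prod.mk_eq_zero, tmul_sub, sub_tmul, tmul_neg, neg_tmul, map_sub, map_neg, nsmul_three,
    TensorProduct.assoc_symm_tmul, e13_tmul_tmul, e22_tmul_tmul, e13_tmul_assoc_symm_tmul]
  refine ⟨?_, ?_, ?_, ?_⟩ <;> abel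

theorem gamma4Mul_neg_self (a : Gamma4 F V) : gamma4Mul F a (-a) = 0 := by
  convert neg_gamma4Mul_self F (-a)
  exact (neg_neg a).symm

theorem gamma4Mul_assoc (a b c : Gamma4 F V) :
    gamma4Mul F (gamma4Mul F a b) c = gamma4Mul F a (gamma4Mul F b c) := by
  obtain ⟨a₁, a₂, a₃, a₄⟩ := a
  obtain ⟨b₁, b₂, b₃, b₄⟩ := b
  obtain ⟨c₁, c₂, c₃, c₄⟩ := c
  simp only [gamma4Mul, br11, br12, br21, br13, br31, br22, Prod.mk.injEq, tmul_add, add_tmul,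
    tmul_sub, sub_tmul, map_add, map_sub, nsmul_three, TensorProduct.assoc_symm_tmul,
    e13_tmul_tmul, e22_tmul_tmul, e13_tmul_assoc_symm_tmul]
  refine ⟨?_, ?_, ?_, ?_⟩ <;> abel

end Gamma4

theorem gamma4_is_group (F V : Type*) [Field F] [AddCommGroup V] [Module F V] :
    (∀ a b c : V × (V ⊗[F] V) × ((V ⊗[F] V) ⊗[F] V) × (((V ⊗[F] V) ⊗[F] V) ⊗[F] V),
        gamma4Mul F (gamma4Mul F a b) c = gamma4Mul F a (gamma4Mul F b c)) ∧
    (∀ a : V × (V ⊗[F] V) × ((V ⊗[F] V) ⊗[F] V) × (((V ⊗[F] V) ⊗[F] V) ⊗[F] V),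
        gamma4Mul F ((0, 0, 0, 0) : V × (V ⊗[F] V) × ((V ⊗[F] V) ⊗[F] V) × (((V ⊗[F] V) ⊗[F] V) ⊗[F] V)) a = a ∧
        gamma4Mul F a ((0, 0, 0, 0) : V × (V ⊗[F] V) × ((V ⊗[F] V) ⊗[F] V) × (((V ⊗[F] V) ⊗[F] V) ⊗[F] V)) = a) ∧
    (∀ a : V × (V ⊗[F] V) × ((V ⊗[F] V) ⊗[F] V) × (((V ⊗[F] V) ⊗[F] V) ⊗[F] V),
        gamma4Mul F (-a.1, -a.2.1, -a.2.2.1, -a.2.2.2) a = ((0, 0, 0, 0) : V × (V ⊗[F] V) × ((V ⊗[F] V) ⊗[F] V) × (((V ⊗[F] V) ⊗[F] V) ⊗[F] V)) ∧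
        gamma4Mul F a (-a.1, -a.2.1, -a.2.2.1, -a.2.2.2) = ((0, 0, 0, 0) : V × (V ⊗[F] V) × ((V ⊗[F] V) ⊗[F] V) × (((V ⊗[F] V) ⊗[F] V) ⊗[F] V))) :=
  ⟨gamma4Mul_assoc F, fun a => ⟨zero_gamma4Mul F a, gamma4Mul_zero F a⟩,
    fun a => ⟨neg_gamma4Mul_self F a, gamma4Mul_neg_self F a⟩⟩
end

section
/- Let F be a finite field of odd characteristic, V a finite-dimensional F-vector space with dim V = d > 2, U a subspace with 0 < U < V, and H = {g ∈ GL(V) : g(U) = U}. Let U ∧ V denote the subspace of Λ²V spanned by the elements u ∧ v with u ∈ U, v ∈ V, and let Λ²U denote the image of the canonical map Λ²U → Λ²V. Then Λ²V is a uniserial H-module: the subspaces of Λ²V invariant under Λ²g for every g ∈ H are exactly {0}, Λ²U, U ∧ V, and Λ²V (some of which may coincide). In particular, Λ²V is a reducible H-module. -/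
/-!
STATEMENT 15: `F` a finite field of odd characteristic, `V` of finite dimension
`d > 2`, `0 < U < V` a subspace and `H = {g ∈ GL(V) : g(U) = U}`.  Then `Λ²V`
is a uniserial `H`-module: the subspaces of `Λ²V` invariant under `Λ²g` for all
`g ∈ H` are exactly `{0}`, `Λ²U`, `U ∧ V` and `Λ²V` (some of which may
coincide).  In particular `Λ²V` is a reducible `H`-module.
-/

set_option synthInstance.maxHeartbeats 1000000
set_option maxHeartbeats 4000000

open TensorProduct ExteriorAlgebra

open TensorProduct ExteriorAlgebra

section Ext

variable (F : Type*) {V W : Type*} [Field F] [AddCommGroup V] [Module F V]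
  [AddCommGroup W] [Module F W]

/-- The morphism of exterior algebras induced by a linear map sends the `n`-th
exterior power into the `n`-th exterior power. -/
lemma exteriorPower_map_mem (n : ℕ) (f : V →ₗ[F] W) {x : ExteriorAlgebra F V}
    (hx : x ∈ ⋀[F]^n V) : ExteriorAlgebra.map f x ∈ ⋀[F]^n W := by
  rw [← ExteriorAlgebra.ιMulti_span_fixedDegree] at hx ⊢
  induction hx using Submodule.span_induction with
  | mem y hy =>
      obtain ⟨m, rfl⟩ := hy
      rw [ExteriorAlgebra.map_apply_ιMulti]
      exact Submodule.subset_span ⟨_, rfl⟩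
  | zero => simp
  | add a b _ _ h1 h2 => simpa using add_mem h1 h2
  | smul c a _ h => simpa using Submodule.smul_mem _ c h

/-- The linear map `⋀ⁿ f : ⋀ⁿ V → ⋀ⁿ W` induced by a linear map `f : V → W`. -/
noncomputable def extPowMap (n : ℕ) (f : V →ₗ[F] W) : ⋀[F]^n V →ₗ[F] ⋀[F]^n W :=
  (ExteriorAlgebra.map f).toLinearMap.restrict
    (fun _ hx => exteriorPower_map_mem F n f hx)

/-- The wedge `u ∧ v` as an element of the second exterior power `⋀²V`. -/
noncomputable def wedge2 (u v : V) : ⋀[F]^2 V :=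
  ⟨ExteriorAlgebra.ιMulti F 2 ![u, v],
    ExteriorAlgebra.ιMulti_range F 2 (Set.mem_range_self _)⟩

/-- The wedge `u ∧ v ∧ w` as an element of the third exterior power `⋀³V`. -/
noncomputable def wedge3 (u v w : V) : ⋀[F]^3 V :=
  ⟨ExteriorAlgebra.ιMulti F 3 ![u, v, w],
    ExteriorAlgebra.ιMulti_range F 3 (Set.mem_range_self _)⟩

end Ext

section Defs

variable (F : Type*) {V : Type*} [Field F] [AddCommGroup V] [Module F V]

/-- The subspace `U ∧ V` of `Λ²V` spanned by the wedges `u ∧ v`, `u ∈ U`, `v ∈ V`. -/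
noncomputable def UwedgeV (U : Submodule F V) : Submodule F (⋀[F]^2 V) :=
  Submodule.span F {x | ∃ u v : V, u ∈ U ∧ x = wedge2 F u v}

/-- The image of `Λ²U` in `Λ²V` under the map induced by the inclusion `U → V`. -/
noncomputable def lambda2U (U : Submodule F V) : Submodule F (⋀[F]^2 V) :=
  LinearMap.range (extPowMap F 2 U.subtype)

end Defs

/-!
Take a basis `e` of `V` extending a basis of `U`. As `char F ≠ 2`, the stabilizer of `U` contains
the dilatations `e a ↦ 2 • e a`. For `a ≠ b` the product of the operators `⋀²t - 1` that the
dilatations at `a` and at `b` induce is `x ↦ c_ab(x) • (e a ∧ e b)`, with `c_ab` the coordinate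
of `e a ∧ e b`, and these rank-one maps add up to `2`; so an invariant subspace `W` is spanned by
the basis wedges it contains. The transvections `e a ↦ e a + e b` with `e a ∈ U → e b ∈ U`
also stabilize `U`, and they carry a basis wedge of `W` to every basis wedge with at most as many
indices outside `U`. So `W` is determined by the largest such number, `0`, `1` or `2`, which
gives `Λ²U`, `U ∧ V` or `Λ²V`.
-/

open Module

section Wedge

variable {F V W : Type*} [Field F] [AddCommGroup V] [Module F V] [AddCommGroup W] [Module F W]

lemma wedge2_coe (u v : V) :
    (wedge2 F u v : ExteriorAlgebra F V) = ExteriorAlgebra.ι F u * ExteriorAlgebra.ι F v := by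
  simp [wedge2, ExteriorAlgebra.ιMulti_succ_apply, Matrix.vecTail]

lemma wedge2_add_left (u u' v : V) : wedge2 F (u + u') v = wedge2 F u v + wedge2 F u' v :=
  Subtype.ext <| by simp [wedge2_coe, add_mul]

lemma wedge2_add_right (u v v' : V) : wedge2 F u (v + v') = wedge2 F u v + wedge2 F u v' :=
  Subtype.ext <| by simp [wedge2_coe, mul_add]

lemma wedge2_smul_left (c : F) (u v : V) : wedge2 F (c • u) v = c • wedge2 F u v :=
  Subtype.ext <| by simp [wedge2_coe]

lemma wedge2_smul_right (c : F) (u v : V) : wedge2 F u (c • v) = c • wedge2 F u v :=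
  Subtype.ext <| by simp [wedge2_coe]

lemma wedge2_self (u : V) : wedge2 F u u = 0 :=
  Subtype.ext <| by simp [wedge2_coe]

lemma wedge2_swap (u v : V) : wedge2 F v u = -wedge2 F u v :=
  Subtype.ext <| by
    simpa [wedge2_coe] using eq_neg_of_add_eq_zero_left (ExteriorAlgebra.ι_add_mul_swap v u)

lemma wedge2_mem_swap {S : Submodule F (⋀[F]^2 V)} {u v : V} (h : wedge2 F u v ∈ S) :
    wedge2 F v u ∈ S := by
  rw [wedge2_swap]
  exact neg_mem h

variable (F) in
noncomputable def wedge2Bilin : V →ₗ[F] V →ₗ[F] ⋀[F]^2 V :=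
  LinearMap.mk₂ F (wedge2 F) wedge2_add_left wedge2_smul_left wedge2_add_right wedge2_smul_right

lemma extPowMap_wedge2 (f : V →ₗ[F] W) (u v : V) :
    extPowMap F 2 f (wedge2 F u v) = wedge2 F (f u) (f v) := by
  apply Subtype.ext
  change ExteriorAlgebra.map f (ιMulti F 2 ![u, v]) = ιMulti F 2 ![f u, f v]
  rw [ExteriorAlgebra.map_apply_ιMulti]
  congr 1
  ext i
  fin_cases i <;> rfl

lemma linearMap_ext_wedge2 {f g : ⋀[F]^2 V →ₗ[F] W}
    (h : ∀ u v, f (wedge2 F u v) = g (wedge2 F u v)) : f = g := by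
  ext m
  have hm : m = ![m 0, m 1] := by
    ext i
    fin_cases i <;> rfl
  rw [hm]
  exact h (m 0) (m 1)

end Wedge

section Shift

variable {F V : Type*} [Field F] [AddCommGroup V] [Module F V]

noncomputable def wedgeShift (f : Dual F V) (w : V) : ⋀[F]^2 V →ₗ[F] ⋀[F]^2 V :=
  extPowMap F 2 (LinearMap.transvection f w) - LinearMap.id

lemma wedgeShift_wedge2 (f : Dual F V) (w u v : V) :
    wedgeShift f w (wedge2 F u v) = f u • wedge2 F w v + f v • wedge2 F u w := by
  simp only [wedgeShift, LinearMap.sub_apply, extPowMap_wedge2, LinearMap.transvection.apply,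
    LinearMap.id_apply, wedge2_add_left, wedge2_add_right, wedge2_smul_left, wedge2_smul_right,
    wedge2_self, smul_zero]
  module

noncomputable def wedgeDual (φ ψ : Dual F V) : Dual F (⋀[F]^2 V) :=
  exteriorPower.pairingDual F V 2 (exteriorPower.ιMulti F 2 ![φ, ψ])

lemma wedgeDual_wedge2 (φ ψ : Dual F V) (u v : V) :
    wedgeDual φ ψ (wedge2 F u v) = φ u * ψ v - ψ u * φ v := by
  simp [wedgeDual, show wedge2 F u v = exteriorPower.ιMulti F 2 ![u, v] from rfl,
    Matrix.det_fin_two]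

lemma wedgeShift_comp_wedgeShift {f g : Dual F V} {w z : V} (hz : f z = 0) :
    wedgeShift f w ∘ₗ wedgeShift g z = (wedgeDual f g).smulRight (wedge2 F w z) :=
  linearMap_ext_wedge2 fun u v => by
    rw [LinearMap.comp_apply, wedgeShift_wedge2, map_add, map_smul, map_smul, wedgeShift_wedge2,
      wedgeShift_wedge2, LinearMap.smulRight_apply, wedgeDual_wedge2, hz, wedge2_swap z w]
    module

end Shift

section Basis

variable {F V ι : Type*} [Field F] [AddCommGroup V] [Module F V] [Fintype ι]
  (e : Basis ι F V)

lemma sum_sum_smul_wedge2_basis (u v : V) :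
    ∑ a, ∑ b, (e.coord a u * e.coord b v) • wedge2 F (e a) (e b) = wedge2 F u v := by
  have h := congrArg₂ (wedge2Bilin F · ·) (e.sum_repr u) (e.sum_repr v)
  simp only [map_sum, LinearMap.sum_apply, map_smul, LinearMap.smul_apply, Finset.smul_sum,
    smul_smul] at h
  rw [Finset.sum_comm] at h
  simpa [wedge2Bilin, mul_comm, Basis.coord_apply] using h

lemma sum_sum_wedgeDual_smulRight :
    ∑ a, ∑ b, (wedgeDual (e.coord a) (e.coord b)).smulRight (wedge2 F (e a) (e b)) =
      (2 : F) • LinearMap.id :=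
  linearMap_ext_wedge2 fun u v => by
    have hvu : ∑ a, ∑ b, (e.coord b u * e.coord a v) • wedge2 F (e a) (e b) = wedge2 F v u := by
      simpa only [mul_comm] using sum_sum_smul_wedge2_basis e v u
    simp only [LinearMap.sum_apply, LinearMap.smulRight_apply, wedgeDual_wedge2, sub_smul,
      Finset.sum_sub_distrib, sum_sum_smul_wedge2_basis, hvu, wedge2_swap u v,
      LinearMap.smul_apply, LinearMap.id_apply]
    module

def wedgeSupport (S : Submodule F (⋀[F]^2 V)) : Set (ι × ι) :=
  {p | p.1 ≠ p.2 ∧ wedge2 F (e p.1) (e p.2) ∈ S}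

lemma span_wedgeSupport {S : Submodule F (⋀[F]^2 V)} (h2 : (2 : F) ≠ 0)
    (hS : ∀ a, ∀ x ∈ S, wedgeShift (e.coord a) (e a) x ∈ S) :
    Submodule.span F ((fun p => wedge2 F (e p.1) (e p.2)) '' wedgeSupport e S) = S := by
  refine le_antisymm (Submodule.span_le.2 ?_) fun x hx => ?_
  · rintro _ ⟨p, hp, rfl⟩
    exact hp.2
  have hterm : ∀ a b, wedgeDual (e.coord a) (e.coord b) x • wedge2 F (e a) (e b) ∈
      Submodule.span F ((fun p => wedge2 F (e p.1) (e p.2)) '' wedgeSupport e S) := by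
    intro a b
    obtain rfl | hab := eq_or_ne a b
    · simp [wedge2_self]
    obtain hc | hc := eq_or_ne (wedgeDual (e.coord a) (e.coord b) x) 0
    · simp [hc]
    refine Submodule.smul_mem _ _ (Submodule.subset_span ⟨(a, b), ⟨hab, ?_⟩, rfl⟩)
    rw [← Submodule.smul_mem_iff S hc, ← LinearMap.smulRight_apply,
      ← wedgeShift_comp_wedgeShift (by simp [hab] : e.coord a (e b) = 0)]
    exact hS a _ (hS b x hx)
  have h2x : (2 : F) • x =
      ∑ a, ∑ b, wedgeDual (e.coord a) (e.coord b) x • wedge2 F (e a) (e b) := by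
    simpa using (LinearMap.congr_fun (sum_sum_wedgeDual_smulRight e) x).symm
  exact (Submodule.smul_mem_iff _ h2).1 (h2x ▸ sum_mem fun a _ => sum_mem fun b _ => hterm a b)

end Basis

section Stabilizer

variable {F V : Type*} [Field F] [AddCommGroup V] [Module F V]

def IsStabilizerInvariant (U : Submodule F V) (S : Submodule F (⋀[F]^2 V)) : Prop :=
  ∀ g : V ≃ₗ[F] V, Submodule.map g.toLinearMap U = U →
    ∀ x ∈ S, extPowMap F 2 g.toLinearMap x ∈ S

lemma map_dilatransvection_eq_self {U : Submodule F V} {f : Dual F V} {w : V}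
    (h : IsUnit (1 + f w)) (hw : w ∈ U ∨ ∀ u ∈ U, f u = 0) :
    U.map (LinearEquiv.dilatransvection h).toLinearMap = U := by
  have key : ∀ c : F, ∀ u ∈ U, u + f u • c • w ∈ U := by
    intro c u hu
    rcases hw with hw | hf
    · exact add_mem hu (U.smul_mem _ (U.smul_mem _ hw))
    · simpa [hf u hu] using hu
  refine le_antisymm ?_ fun u hu => ?_
  · rintro _ ⟨u, hu, rfl⟩
    simpa [LinearMap.transvection.apply] using key 1 u hu
  · rw [Submodule.map_equiv_eq_comap_symm]
    change u + f u • (-h.unit⁻¹) • w ∈ U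
    rw [Units.smul_def]
    exact key _ u hu

lemma IsStabilizerInvariant.wedgeShift_mem {U : Submodule F V}
    {S : Submodule F (⋀[F]^2 V)} (hS : IsStabilizerInvariant U S) {f : Dual F V} {w : V}
    (h : IsUnit (1 + f w)) (hw : w ∈ U ∨ ∀ u ∈ U, f u = 0) {x : ⋀[F]^2 V} (hx : x ∈ S) :
    wedgeShift f w x ∈ S :=
  sub_mem (hS _ (map_dilatransvection_eq_self h hw) x hx) hx

lemma isStabilizerInvariant_bot (U : Submodule F V) : IsStabilizerInvariant U ⊥ := by
  intro g _ x hx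
  simp_all

lemma isStabilizerInvariant_top (U : Submodule F V) : IsStabilizerInvariant U ⊤ :=
  fun _ _ _ _ => Submodule.mem_top

lemma wedge2_mem_lambda2U {U : Submodule F V} {u v : V} (hu : u ∈ U) (hv : v ∈ U) :
    wedge2 F u v ∈ lambda2U F U :=
  ⟨wedge2 F (⟨u, hu⟩ : U) ⟨v, hv⟩, extPowMap_wedge2 _ _ _⟩

lemma wedge2_mem_UwedgeV {U : Submodule F V} {u : V} (hu : u ∈ U) (v : V) :
    wedge2 F u v ∈ UwedgeV F U :=
  Submodule.subset_span ⟨u, v, hu, rfl⟩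

lemma isStabilizerInvariant_lambda2U (U : Submodule F V) :
    IsStabilizerInvariant U (lambda2U F U) := by
  rintro g hg _ ⟨y, rfl⟩
  have hgU : ∀ u ∈ U, g u ∈ U := fun u hu => hg ▸ Submodule.mem_map_of_mem hu
  have hcomm : extPowMap F 2 g.toLinearMap ∘ₗ extPowMap F 2 U.subtype =
      extPowMap F 2 U.subtype ∘ₗ extPowMap F 2 (g.toLinearMap.restrict hgU) :=
    linearMap_ext_wedge2 fun u v => by simp [extPowMap_wedge2]
  exact ⟨_, (LinearMap.congr_fun hcomm y).symm⟩

lemma isStabilizerInvariant_UwedgeV (U : Submodule F V) :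
    IsStabilizerInvariant U (UwedgeV F U) := by
  intro g hg x hx
  refine (Submodule.span_le (p := (UwedgeV F U).comap (extPowMap F 2 g.toLinearMap))).2 ?_ hx
  rintro _ ⟨u, v, hu, rfl⟩
  simpa [extPowMap_wedge2] using wedge2_mem_UwedgeV (hg ▸ Submodule.mem_map_of_mem hu) (g v)

lemma lambda2U_le_ker_wedgeDual {U : Submodule F V} {φ : Dual F V} (hφ : ∀ u ∈ U, φ u = 0)
    (ψ : Dual F V) : lambda2U F U ≤ LinearMap.ker (wedgeDual φ ψ) := by
  rintro _ ⟨y, rfl⟩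
  have h : wedgeDual φ ψ ∘ₗ extPowMap F 2 U.subtype = 0 :=
    linearMap_ext_wedge2 fun u v => by
      simp [extPowMap_wedge2, wedgeDual_wedge2, hφ u u.2, hφ v v.2]
  exact LinearMap.congr_fun h y

lemma UwedgeV_le_ker_wedgeDual {U : Submodule F V} {φ ψ : Dual F V} (hφ : ∀ u ∈ U, φ u = 0)
    (hψ : ∀ u ∈ U, ψ u = 0) : UwedgeV F U ≤ LinearMap.ker (wedgeDual φ ψ) := by
  refine Submodule.span_le.2 ?_
  rintro _ ⟨u, v, hu, rfl⟩
  simp [wedgeDual_wedge2, hφ u hu, hψ u hu]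

end Stabilizer

section AdaptedBasis

variable {F V ι : Type*} [Field F] [AddCommGroup V] [Module F V] (e : Basis ι F V) {s : Set ι}

lemma coord_eq_zero_of_mem_span_image {a : ι} (ha : a ∉ s) {u : V}
    (hu : u ∈ Submodule.span F (e '' s)) : e.coord a u = 0 :=
  Finsupp.notMem_support_iff.1 fun h => ha (e.mem_span_image.1 hu h)

lemma wedge2_basis_ne_zero {a b : ι} (hab : a ≠ b) : wedge2 F (e a) (e b) ≠ 0 := fun h => by
  simpa [wedgeDual_wedge2, hab, hab.symm] using congrArg (wedgeDual (e.coord a) (e.coord b)) h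

lemma wedge2_basis_mem_lambda2U_iff {a b : ι} (hab : a ≠ b) :
    wedge2 F (e a) (e b) ∈ lambda2U F (Submodule.span F (e '' s)) ↔ a ∈ s ∧ b ∈ s := by
  refine ⟨fun h => ?_, fun h => wedge2_mem_lambda2U (Submodule.subset_span ⟨a, h.1, rfl⟩)
    (Submodule.subset_span ⟨b, h.2, rfl⟩)⟩
  by_contra hn
  rcases not_and_or.1 hn with ha | hb
  · simpa [wedgeDual_wedge2, hab, hab.symm] using lambda2U_le_ker_wedgeDual
      (fun u hu => coord_eq_zero_of_mem_span_image e ha hu) (e.coord b) h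
  · simpa [wedgeDual_wedge2, hab, hab.symm] using lambda2U_le_ker_wedgeDual
      (fun u hu => coord_eq_zero_of_mem_span_image e hb hu) (e.coord a) h

lemma wedge2_basis_mem_UwedgeV_iff {a b : ι} (hab : a ≠ b) :
    wedge2 F (e a) (e b) ∈ UwedgeV F (Submodule.span F (e '' s)) ↔ a ∈ s ∨ b ∈ s := by
  refine ⟨fun h => ?_, ?_⟩
  · by_contra! hn
    simpa [wedgeDual_wedge2, hab, hab.symm] using UwedgeV_le_ker_wedgeDual
      (fun u hu => coord_eq_zero_of_mem_span_image e hn.1 hu)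
      (fun u hu => coord_eq_zero_of_mem_span_image e hn.2 hu) h
  · rintro (ha | hb)
    · exact wedge2_mem_UwedgeV (Submodule.subset_span (Set.mem_image_of_mem e ha)) _
    · exact wedge2_mem_swap <|
        wedge2_mem_UwedgeV (Submodule.subset_span (Set.mem_image_of_mem e hb)) _

namespace IsStabilizerInvariant

variable {e} {S : Submodule F (⋀[F]^2 V)}

lemma wedgeShift_basis_mem (hS : IsStabilizerInvariant (Submodule.span F (e '' s)) S)
    (h2 : (2 : F) ≠ 0) {a b : ι} (hab : a ∈ s → b ∈ s) {x : ⋀[F]^2 V} (hx : x ∈ S) :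
    wedgeShift (e.coord a) (e b) x ∈ S := by
  refine hS.wedgeShift_mem ?_ ?_ hx
  · obtain rfl | hba := eq_or_ne b a
    · simpa [one_add_one_eq_two] using h2
    · simp [hba]
  · by_cases ha : a ∈ s
    · exact .inl (Submodule.subset_span ⟨b, hab ha, rfl⟩)
    · exact .inr fun u hu => coord_eq_zero_of_mem_span_image e ha hu

lemma wedge2_basis_mem_of_move (hS : IsStabilizerInvariant (Submodule.span F (e '' s)) S)
    (h2 : (2 : F) ≠ 0) {a b y : ι} (hya : y ≠ a) (hab : a ∈ s → b ∈ s)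
    (h : wedge2 F (e a) (e y) ∈ S) : wedge2 F (e b) (e y) ∈ S := by
  simpa [wedgeShift_wedge2, hya, hya.symm] using hS.wedgeShift_basis_mem h2 hab h

lemma wedge2_basis_mem_of_imp (hS : IsStabilizerInvariant (Submodule.span F (e '' s)) S)
    (h2 : (2 : F) ≠ 0) {x y x' y' : ι} (hxy : x ≠ y) (hx : x ∈ s → x' ∈ s)
    (hy : y ∈ s → y' ∈ s) (h : wedge2 F (e x) (e y) ∈ S) : wedge2 F (e x') (e y') ∈ S := by
  have key : ∀ {x y x' y' : ι}, x ≠ y → (x ∈ s → x' ∈ s) → (y ∈ s → y' ∈ s) → x' ≠ y →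
      wedge2 F (e x) (e y) ∈ S → wedge2 F (e x') (e y') ∈ S :=
    fun hxy hx hy hx'y h => wedge2_mem_swap <| hS.wedge2_basis_mem_of_move h2 hx'y hy <|
      wedge2_mem_swap <| hS.wedge2_basis_mem_of_move h2 hxy.symm hx h
  by_cases hx'y : x' = y
  · by_cases hy'x : y' = x
    · subst hx'y hy'x
      exact wedge2_mem_swap h
    · exact wedge2_mem_swap (key hxy.symm hy hx hy'x (wedge2_mem_swap h))
  · exact key hxy hx hy hx'y h

lemma span_wedgeSupport_eq [Fintype ι]
    (hS : IsStabilizerInvariant (Submodule.span F (e '' s)) S) (h2 : (2 : F) ≠ 0) :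
    Submodule.span F ((fun p => wedge2 F (e p.1) (e p.2)) '' wedgeSupport e S) = S :=
  span_wedgeSupport e h2 fun _ _ hx => hS.wedgeShift_basis_mem h2 id hx

lemma eq_of_wedgeSupport_eq [Fintype ι]
    (hS : IsStabilizerInvariant (Submodule.span F (e '' s)) S) (h2 : (2 : F) ≠ 0)
    {T : Submodule F (⋀[F]^2 V)} (hT : IsStabilizerInvariant (Submodule.span F (e '' s)) T)
    (h : wedgeSupport e S = wedgeSupport e T) : S = T := by
  rw [← hS.span_wedgeSupport_eq h2, h, hT.span_wedgeSupport_eq h2]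

end IsStabilizerInvariant

lemma lambda2U_ne_bot {a b : ι} (hab : a ≠ b) (ha : a ∈ s) (hb : b ∈ s) :
    lambda2U F (Submodule.span F (e '' s)) ≠ ⊥ :=
  (Submodule.ne_bot_iff _).2
    ⟨_, (wedge2_basis_mem_lambda2U_iff e hab).2 ⟨ha, hb⟩, wedge2_basis_ne_zero e hab⟩

lemma lambda2U_ne_top {a b : ι} (hab : a ≠ b) (hb : b ∉ s) :
    lambda2U F (Submodule.span F (e '' s)) ≠ ⊤ := fun h =>
  hb ((wedge2_basis_mem_lambda2U_iff e hab).1 (h ▸ Submodule.mem_top)).2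

lemma UwedgeV_ne_bot {a b : ι} (hab : a ≠ b) (ha : a ∈ s) :
    UwedgeV F (Submodule.span F (e '' s)) ≠ ⊥ :=
  (Submodule.ne_bot_iff _).2
    ⟨_, (wedge2_basis_mem_UwedgeV_iff e hab).2 (.inl ha), wedge2_basis_ne_zero e hab⟩

lemma UwedgeV_ne_top {a b : ι} (hab : a ≠ b) (ha : a ∉ s) (hb : b ∉ s) :
    UwedgeV F (Submodule.span F (e '' s)) ≠ ⊤ := fun h =>
  ((wedge2_basis_mem_UwedgeV_iff e hab).1 (h ▸ Submodule.mem_top)).elim ha hb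

end AdaptedBasis

section Levels

variable {ι : Type*} (s : Set ι) [DecidablePred (· ∈ s)]

def outsideCount (p : ι × ι) : ℕ :=
  (if p.1 ∈ s then 0 else 1) + (if p.2 ∈ s then 0 else 1)

def levelSet (n : ℕ) : Set (ι × ι) :=
  {p | p.1 ≠ p.2 ∧ outsideCount s p ≤ n}

lemma outsideCount_le_two (p : ι × ι) : outsideCount s p ≤ 2 := by
  unfold outsideCount
  split_ifs <;> omega

variable {F V : Type*} [Field F] [AddCommGroup V] [Module F V] (e : Basis ι F V)

lemma wedgeSupport_bot : wedgeSupport e (⊥ : Submodule F (⋀[F]^2 V)) = ∅ :=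
  Set.eq_empty_of_forall_notMem fun _ hp =>
    wedge2_basis_ne_zero e hp.1 ((Submodule.mem_bot F).1 hp.2)

lemma wedgeSupport_lambda2U :
    wedgeSupport e (lambda2U F (Submodule.span F (e '' s))) = levelSet s 0 := by
  ext p
  refine and_congr_right fun hp => (wedge2_basis_mem_lambda2U_iff e hp).trans ?_
  unfold outsideCount
  split_ifs <;> simp_all

lemma wedgeSupport_UwedgeV :
    wedgeSupport e (UwedgeV F (Submodule.span F (e '' s))) = levelSet s 1 := by
  ext p
  refine and_congr_right fun hp => (wedge2_basis_mem_UwedgeV_iff e hp).trans ?_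
  unfold outsideCount
  split_ifs <;> simp_all

lemma wedgeSupport_top : wedgeSupport e (⊤ : Submodule F (⋀[F]^2 V)) = levelSet s 2 :=
  Set.ext fun p => and_congr_right fun _ =>
    iff_of_true Submodule.mem_top (outsideCount_le_two s p)

namespace IsStabilizerInvariant

variable {s e} {S : Submodule F (⋀[F]^2 V)}

lemma mem_wedgeSupport_of_outsideCount_le
    (hS : IsStabilizerInvariant (Submodule.span F (e '' s)) S) (h2 : (2 : F) ≠ 0)
    {p q : ι × ι} (hp : p ∈ wedgeSupport e S) (hq : q.1 ≠ q.2)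
    (hpq : outsideCount s q ≤ outsideCount s p) : q ∈ wedgeSupport e S := by
  refine ⟨hq, ?_⟩
  have : (p.1 ∈ s → q.1 ∈ s) ∧ (p.2 ∈ s → q.2 ∈ s) ∨
      (p.1 ∈ s → q.2 ∈ s) ∧ (p.2 ∈ s → q.1 ∈ s) := by
    unfold outsideCount at hpq
    split_ifs at hpq <;> first | omega | tauto
  rcases this with ⟨h₁, h₂⟩ | ⟨h₁, h₂⟩
  · exact hS.wedge2_basis_mem_of_imp h2 hp.1 h₁ h₂ hp.2
  · exact wedge2_mem_swap (hS.wedge2_basis_mem_of_imp h2 hp.1 h₁ h₂ hp.2)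

lemma wedgeSupport_eq_empty_or_levelSet [Finite ι]
    (hS : IsStabilizerInvariant (Submodule.span F (e '' s)) S) (h2 : (2 : F) ≠ 0) :
    wedgeSupport e S = ∅ ∨ ∃ n ≤ 2, wedgeSupport e S = levelSet s n := by
  obtain h | hne := (wedgeSupport e S).eq_empty_or_nonempty
  · exact .inl h
  obtain ⟨p, hp, hmax⟩ := Set.exists_max_image _ (outsideCount s) (Set.toFinite _) hne
  exact .inr ⟨outsideCount s p, outsideCount_le_two s p, Set.ext fun q =>
    ⟨fun hq => ⟨hq.1, hmax q hq⟩,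
      fun hq => hS.mem_wedgeSupport_of_outsideCount_le h2 hp hq.1 hq.2⟩⟩

theorem eq_bot_or_lambda2U_or_UwedgeV_or_top [Fintype ι]
    (hS : IsStabilizerInvariant (Submodule.span F (e '' s)) S) (h2 : (2 : F) ≠ 0) :
    S = ⊥ ∨ S = lambda2U F (Submodule.span F (e '' s)) ∨
      S = UwedgeV F (Submodule.span F (e '' s)) ∨ S = ⊤ := by
  rcases hS.wedgeSupport_eq_empty_or_levelSet h2 with h | ⟨n, hn, h⟩
  · exact .inl <| hS.eq_of_wedgeSupport_eq h2 (isStabilizerInvariant_bot _)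
      (h.trans (wedgeSupport_bot e).symm)
  interval_cases n
  · exact .inr <| .inl <| hS.eq_of_wedgeSupport_eq h2 (isStabilizerInvariant_lambda2U _)
      (h.trans (wedgeSupport_lambda2U s e).symm)
  · exact .inr <| .inr <| .inl <| hS.eq_of_wedgeSupport_eq h2 (isStabilizerInvariant_UwedgeV _)
      (h.trans (wedgeSupport_UwedgeV s e).symm)
  · exact .inr <| .inr <| .inr <| hS.eq_of_wedgeSupport_eq h2 (isStabilizerInvariant_top _)
      (h.trans (wedgeSupport_top s e).symm)

end IsStabilizerInvariant

end Levels

lemma Submodule.exists_basis_span_image_inl {F V : Type*} [Field F] [AddCommGroup V]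
    [Module F V] [FiniteDimensional F V] (U : Submodule F V) :
    ∃ (k m : ℕ) (e : Basis (Fin k ⊕ Fin m) F V),
      Submodule.span F (e '' Set.range Sum.inl) = U := by
  obtain ⟨U', hU'⟩ := U.exists_isCompl
  let e := ((finBasis F U).prod (finBasis F U')).map (U.prodEquivOfIsCompl U' hU')
  have he : e ∘ Sum.inl = U.subtype ∘ finBasis F U := funext fun i => by
    simp [e, Basis.prod_apply, Submodule.coe_prodEquivOfIsCompl']
  refine ⟨_, _, e, ?_⟩
  rw [← Set.range_comp, he, Set.range_comp, ← Submodule.map_span, Basis.span_eq,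
    Submodule.map_subtype_top]

theorem c1_exterior_square_uniserial_general
    (F V : Type*) [Field F] [AddCommGroup V] [Module F V]
    [FiniteDimensional F V] (hodd : ringChar F ≠ 2)
    (hdim : 2 < Module.finrank F V)
    (U : Submodule F V) (hUbot : U ≠ ⊥) (hUtop : U ≠ ⊤) :
    -- `Λ²V` is uniserial as an `H`-module, with submodule lattice
    -- `{0} ⊆ Λ²U ⊆ U ∧ V ⊆ Λ²V`:
    (∀ W : Submodule F (↥(⋀[F]^2 V)),
      (∀ (g : V ≃ₗ[F] V), Submodule.map g.toLinearMap U = U →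
        ∀ x ∈ W, extPowMap F 2 g.toLinearMap x ∈ W) →
      W = ⊥ ∨ W = lambda2U F U ∨ W = UwedgeV F U ∨ W = ⊤) ∧
    -- in particular, `Λ²V` is a reducible `H`-module:
    (∃ W : Submodule F (↥(⋀[F]^2 V)),
      (∀ (g : V ≃ₗ[F] V), Submodule.map g.toLinearMap U = U →
        ∀ x ∈ W, extPowMap F 2 g.toLinearMap x ∈ W) ∧ W ≠ ⊥ ∧ W ≠ ⊤) := by
  classical
  have h2 : (2 : F) ≠ 0 := Ring.two_ne_zero hodd
  obtain ⟨k, m, e, rfl⟩ := U.exists_basis_span_image_inl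
  refine ⟨fun W hW => IsStabilizerInvariant.eq_bot_or_lambda2U_or_UwedgeV_or_top hW h2, ?_⟩
  have hk : 0 < k := Nat.pos_of_ne_zero <| by
    rintro rfl
    simp at hUbot
  have hm : 0 < m := Nat.pos_of_ne_zero <| by
    rintro rfl
    have hinl : Set.range (Sum.inl : Fin k → Fin k ⊕ Fin 0) = Set.univ :=
      Set.range_eq_univ.2 (Sum.forall.2 ⟨fun i => ⟨i, rfl⟩, fun j => j.elim0⟩)
    simp [hinl, Basis.span_eq] at hUtop
  have hkm : 2 < k + m := by simpa [finrank_eq_card_basis e] using hdim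
  by_cases hm2 : 2 ≤ m
  · exact ⟨_, isStabilizerInvariant_UwedgeV _,
      UwedgeV_ne_bot e (b := .inr ⟨0, hm⟩) Sum.inl_ne_inr ⟨⟨0, hk⟩, rfl⟩,
      UwedgeV_ne_top e (a := .inr ⟨0, hm⟩) (b := .inr ⟨1, hm2⟩) (by simp) (by simp) (by simp)⟩
  · exact ⟨_, isStabilizerInvariant_lambda2U _,
      lambda2U_ne_bot e (a := .inl ⟨0, hk⟩) (b := .inl ⟨1, by omega⟩) (by simp)
        ⟨_, rfl⟩ ⟨_, rfl⟩,
      lambda2U_ne_top e (a := .inl ⟨0, hk⟩) (b := .inr ⟨0, hm⟩) Sum.inl_ne_inr (by simp)⟩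

theorem c1_exterior_square_uniserial
    (F V : Type*) [Field F] [Fintype F] [AddCommGroup V] [Module F V]
    [FiniteDimensional F V] (hodd : ringChar F ≠ 2)
    (hdim : 2 < Module.finrank F V)
    (U : Submodule F V) (hUbot : U ≠ ⊥) (hUtop : U ≠ ⊤) :
    -- `Λ²V` is uniserial as an `H`-module, with submodule lattice
    -- `{0} ⊆ Λ²U ⊆ U ∧ V ⊆ Λ²V`:
    (∀ W : Submodule F (↥(⋀[F]^2 V)),
      (∀ (g : V ≃ₗ[F] V), Submodule.map g.toLinearMap U = U →
        ∀ x ∈ W, extPowMap F 2 g.toLinearMap x ∈ W) →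
      W = ⊥ ∨ W = lambda2U F U ∨ W = UwedgeV F U ∨ W = ⊤) ∧
    -- in particular, `Λ²V` is a reducible `H`-module:
    (∃ W : Submodule F (↥(⋀[F]^2 V)),
      (∀ (g : V ≃ₗ[F] V), Submodule.map g.toLinearMap U = U →
        ∀ x ∈ W, extPowMap F 2 g.toLinearMap x ∈ W) ∧ W ≠ ⊥ ∧ W ≠ ⊤) :=
  c1_exterior_square_uniserial_general F V hodd hdim U hUbot hUtop
end
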